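/- Let m = 8, so that ⟨K, K⟩ = 0 in Λ_8. If D ∈ Λ_8 satisfies ⟨D, K⟩ = 0 and ⟨D, D⟩ = 0, then D is an integer multiple of K. (The only isotropic vectors in the orthogonal complement of the canonical class of a rational surface with K² = 0 are the multiples of the canonical class; this underlies the classification of genus-1 pencils: any pencil with D² = D·K = 0 has class r(2s+2f−e_1−⋯−e_8) for some integer r.) -/

import Mathlib

/-- The basis vector `s` of the lattice `Λ_m = ℤ^{m+2}` (coordinate 0). -/
def sV (m : ℕ) : Fin (m + 2) → ℤ := fun i => if (i : ℕ) = 0 then 1 else 0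

/-- The basis vector `f` of the lattice `Λ_m = ℤ^{m+2}` (coordinate 1). -/
def fV (m : ℕ) : Fin (m + 2) → ℤ := fun i => if (i : ℕ) = 1 then 1 else 0

/-- The basis vector `e_j` (for `1 ≤ j ≤ m`) of the lattice `Λ_m = ℤ^{m+2}`
(coordinate `j+1`). -/
def eV (m j : ℕ) : Fin (m + 2) → ℤ := fun i => if (i : ℕ) = j + 1 then 1 else 0

/-- The even intersection form on `Λ_m`: `⟨s,s⟩ = 0`, `⟨s,f⟩ = 1`, `⟨f,f⟩ = 0`,
`⟨s,e_i⟩ = ⟨f,e_i⟩ = 0`, `⟨e_i,e_j⟩ = −δ_{ij}`. -/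
def evenForm (m : ℕ) (u v : Fin (m + 2) → ℤ) : ℤ :=
  u 0 * v 1 + u 1 * v 0 - ∑ i : Fin (m + 2), if 2 ≤ (i : ℕ) then u i * v i else 0

/-- The canonical class `K = −2s − 2f + Σ_{i=1}^m e_i` (even case). -/
def evenK (m : ℕ) : Fin (m + 2) → ℤ :=
  (-2 : ℤ) • sV m + (-2 : ℤ) • fV m + ∑ j ∈ Finset.Icc 1 m, eV m j

/-- The even simple roots: `σ_0 = s − f`, `σ_1 = f − e_1 − e_2`,
`σ_k = e_{k−1} − e_k` for `2 ≤ k ≤ m`. -/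
def evenRoot (m k : ℕ) : Fin (m + 2) → ℤ :=
  if k = 0 then sV m - fV m
  else if k = 1 then fV m - eV m 1 - eV m 2
  else eV m (k - 1) - eV m k


/-!
Write `D = a s + b f + ∑ cⱼ eⱼ`. The two conditions say `∑ cⱼ = -2 (a + b)` and `∑ cⱼ² = 2ab`,
so Cauchy–Schwarz for the eight `cⱼ` reads `4 (a + b)² ≤ 16ab`, i.e. `(a - b)² ≤ 0`. Hence
`a = b` and equality holds in Cauchy–Schwarz, which forces all `cⱼ` to be equal to some `r`;
then `8r = -4a`, so `D = r K`.
-/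

open Finset

theorem Finset.sum_sq_card_mul_sub_sum {ι R : Type*} [CommRing R] (s : Finset ι) (c : ι → R) :
    ∑ i ∈ s, (#s * c i - ∑ j ∈ s, c j) ^ 2 =
      #s * (#s * ∑ i ∈ s, c i ^ 2 - (∑ i ∈ s, c i) ^ 2) := by
  simp only [sub_sq, sum_add_distrib, sum_sub_distrib, mul_pow, ← mul_sum, ← sum_mul,
    sum_const, nsmul_eq_mul]
  ring

theorem Finset.card_mul_eq_sum_of_card_mul_sum_sq_le {ι R : Type*} [CommRing R] [LinearOrder R]
    [IsStrictOrderedRing R] {s : Finset ι} {c : ι → R}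
    (h : #s * ∑ i ∈ s, c i ^ 2 ≤ (∑ i ∈ s, c i) ^ 2) : ∀ i ∈ s, #s * c i = ∑ j ∈ s, c j := by
  have hsum : ∑ i ∈ s, (#s * c i - ∑ j ∈ s, c j) ^ 2 = 0 := by
    refine le_antisymm ?_ (sum_nonneg fun i _ => sq_nonneg _)
    rw [sum_sq_card_mul_sub_sum]
    exact mul_nonpos_of_nonneg_of_nonpos (Nat.cast_nonneg _) (sub_nonpos.2 h)
  intro i hi
  rw [sum_eq_zero_iff_of_nonneg fun i _ => sq_nonneg _] at hsum
  exact sub_eq_zero.1 (pow_eq_zero_iff two_ne_zero |>.1 (hsum i hi))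

section

variable (m : ℕ)

theorem evenK_zero : evenK m 0 = -2 := by
  simp [evenK, sV, fV, eV, Finset.sum_apply]

theorem evenK_one : evenK m 1 = -2 := by
  simp [evenK, sV, fV, eV, Finset.sum_apply]

theorem evenK_succ_succ (j : Fin m) : evenK m j.succ.succ = 1 := by
  simp [evenK, sV, fV, eV, Finset.sum_apply]

theorem evenForm_eq (u v : Fin (m + 2) → ℤ) :
    evenForm m u v = u 0 * v 1 + u 1 * v 0 - ∑ j : Fin m, u j.succ.succ * v j.succ.succ := by
  simp [evenForm, Fin.sum_univ_succ]

theorem evenForm_evenK (u : Fin (m + 2) → ℤ) :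
    evenForm m u (evenK m) = -2 * (u 0 + u 1) - ∑ j : Fin m, u j.succ.succ := by
  simp only [evenForm_eq, evenK_zero, evenK_one, evenK_succ_succ, mul_one]
  ring

theorem evenForm_self (u : Fin (m + 2) → ℤ) :
    evenForm m u u = 2 * u 0 * u 1 - ∑ j : Fin m, u j.succ.succ ^ 2 := by
  simp only [evenForm_eq, sq]
  ring

end

/-- For `m = 8` (so `⟨K, K⟩ = 0` in `Λ_8`): if `D ∈ Λ_8` satisfies `⟨D, K⟩ = 0` and
`⟨D, D⟩ = 0`, then `D` is an integer multiple of `K`.  (The only isotropic vectors in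
the orthogonal complement of the canonical class are its multiples.) -/
theorem isotropic_in_K_perp_is_multiple_of_K (D : Fin (8 + 2) → ℤ)
    (hK : evenForm 8 D (evenK 8) = 0) (hD : evenForm 8 D D = 0) :
    ∃ r : ℤ, D = r • evenK 8 := by
  set c : Fin 8 → ℤ := fun j => D j.succ.succ
  have hsum : ∑ j, c j = -2 * (D 0 + D 1) := by rw [evenForm_evenK] at hK; linarith
  have hsq : ∑ j, c j ^ 2 = 2 * D 0 * D 1 := by rw [evenForm_self] at hD; linarith
  have hCS := sq_sum_le_card_mul_sum_sq (s := univ) (f := c)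
  simp only [card_univ, Fintype.card_fin, Nat.cast_ofNat, hsum, hsq] at hCS
  have h01 : D 1 = D 0 := by nlinarith [sq_nonneg (D 0 - D 1)]
  have hc : ∀ j, 8 * c j = -4 * D 0 := by
    have hEq := card_mul_eq_sum_of_card_mul_sum_sq_le (s := univ) (c := c) (by
      simp only [card_univ, Fintype.card_fin, Nat.cast_ofNat, hsum, hsq, h01]
      exact le_of_eq (by ring))
    intro j
    have := hEq j (mem_univ j)
    simp only [card_univ, Fintype.card_fin, Nat.cast_ofNat, hsum, h01] at this
    linarith
  refine ⟨c 0, funext fun i => Fin.cases ?_ (Fin.cases ?_ fun j => ?_) i⟩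
  · simp only [Pi.smul_apply, evenK_zero, smul_eq_mul]; linarith [hc 0]
  · simp only [Fin.succ_zero_eq_one, Pi.smul_apply, evenK_one, smul_eq_mul]; linarith [hc 0]
  · simp only [Pi.smul_apply, evenK_succ_succ, smul_eq_mul]; linarith [hc 0, hc j]
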